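/- Suppose G_1, …, G_K and G_z are positive definite Hermitian M×M complex matrices and W_s ∈ ℂ^{M×K} is fixed. If W_z and W_z′ in ℂ^{M×(M−K)} both make [W_s, W_z] and [W_s, W_z′] invertible and both satisfy the stationary condition, i.e., [W_s, W_z]^H G_z W_z = E_z and [W_s, W_z′]^H G_z W_z′ = E_z, then J_W([W_s, W_z]) = J_W([W_s, W_z′]); that is, J_W takes the same value at all stationary points with respect to W_z. -/

import Mathlib

/- STATEMENT 4.
M×M complex matrices are encoded as matrices indexed by `Fin K ⊕ Fin L`,
where `M = K + L`, `K ≥ 1`, `L = M - K ≥ 1`. `[W_s, W_z]` is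
`Matrix.fromColumns W_s W_z` and `E_z = [e_{K+1}, …, e_M]`. -/

open Matrix
open scoped ComplexOrder

/-- `E_z = [e_{K+1}, …, e_M]`. -/
def Ez (K L : ℕ) : Matrix (Fin K ⊕ Fin L) (Fin L) ℂ :=
  Matrix.of fun i j => if i = Sum.inr j then 1 else 0

/-- The cost function
`J_W(W) = Σ_{k=1}^K w_k^H G_k w_k + trace(W_z^H G_z W_z) − 2 log|det W|`. -/
noncomputable def JW {K L : ℕ}
    (G : Fin K → Matrix (Fin K ⊕ Fin L) (Fin K ⊕ Fin L) ℂ)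
    (Gz : Matrix (Fin K ⊕ Fin L) (Fin K ⊕ Fin L) ℂ)
    (W : Matrix (Fin K ⊕ Fin L) (Fin K ⊕ Fin L) ℂ) : ℝ :=
  (∑ k : Fin K,
      (star (fun i => W i (Sum.inl k)) ⬝ᵥ ((G k) *ᵥ (fun i => W i (Sum.inl k))))).re
    + (Matrix.trace ((W.submatrix id Sum.inr)ᴴ * Gz * (W.submatrix id Sum.inr))).re
    - 2 * Real.log ‖W.det‖

/-! At a stationary point `W = [W_s, W_z]` the Gram matrix `Wᴴ G_z W` is block lower triangular
with diagonal blocks `W_sᴴ G_z W_s` and `1`, so `|det W|² det G_z = det (W_sᴴ G_z W_s)`.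
Hence `|det W|`, like the trace term `trace (W_zᴴ G_z W_z) = L`, does not depend on `W_z`. -/

theorem Ez_eq_fromRows (K L : ℕ) : Ez K L = fromRows 0 1 := by
  ext (i | i) j <;> simp [Ez, one_apply]

theorem conjTranspose_fromCols_mul_mul_eq_Ez_iff {K L : ℕ}
    (Gz : Matrix (Fin K ⊕ Fin L) (Fin K ⊕ Fin L) ℂ) (Ws : Matrix (Fin K ⊕ Fin L) (Fin K) ℂ)
    (Wz : Matrix (Fin K ⊕ Fin L) (Fin L) ℂ) :
    (fromCols Ws Wz)ᴴ * Gz * Wz = Ez K L ↔ Wsᴴ * Gz * Wz = 0 ∧ Wzᴴ * Gz * Wz = 1 := by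
  rw [Ez_eq_fromRows, conjTranspose_fromCols_eq_fromRows_conjTranspose, fromRows_mul,
    fromRows_mul, fromRows_ext_iff]

section Gram

variable {R n₁ n₂ : Type*} [CommRing R] [StarRing R] [Fintype n₁] [Fintype n₂]

theorem conjTranspose_fromCols_mul_mul_fromCols (G : Matrix (n₁ ⊕ n₂) (n₁ ⊕ n₂) R)
    (A : Matrix (n₁ ⊕ n₂) n₁ R) (B : Matrix (n₁ ⊕ n₂) n₂ R) :
    (fromCols A B)ᴴ * G * fromCols A B =
      fromBlocks (Aᴴ * G * A) (Aᴴ * G * B) (Bᴴ * G * A) (Bᴴ * G * B) := by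
  rw [conjTranspose_fromCols_eq_fromRows_conjTranspose, fromRows_mul, fromRows_mul_fromCols]

theorem star_det_mul_det_mul_det_fromCols [DecidableEq n₁] [DecidableEq n₂]
    {G : Matrix (n₁ ⊕ n₂) (n₁ ⊕ n₂) R}
    {A : Matrix (n₁ ⊕ n₂) n₁ R} {B : Matrix (n₁ ⊕ n₂) n₂ R} (h : Aᴴ * G * B = 0) :
    star (fromCols A B).det * G.det * (fromCols A B).det = (Aᴴ * G * A).det * (Bᴴ * G * B).det := by
  rw [← det_conjTranspose, ← det_mul, ← det_mul, conjTranspose_fromCols_mul_mul_fromCols, h,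
    det_fromBlocks_zero₁₂]

end Gram

section Stationary

variable {n₁ n₂ : Type*} [Fintype n₁] [DecidableEq n₁] [Fintype n₂] [DecidableEq n₂]
  {G : Matrix (n₁ ⊕ n₂) (n₁ ⊕ n₂) ℂ} {Ws : Matrix (n₁ ⊕ n₂) n₁ ℂ}

theorem norm_det_fromCols_sq_mul_det {Wz : Matrix (n₁ ⊕ n₂) n₂ ℂ}
    (h₀ : Wsᴴ * G * Wz = 0) (h₁ : Wzᴴ * G * Wz = 1) :
    (‖(fromCols Ws Wz).det‖ ^ 2 : ℂ) * G.det = (Wsᴴ * G * Ws).det := by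
  rw [← Complex.conj_mul', ← Complex.star_def, mul_right_comm,
    star_det_mul_det_mul_det_fromCols h₀, h₁, det_one, mul_one]

theorem norm_det_fromCols_eq_of_stationary (hG : G.det ≠ 0) {Wz Wz' : Matrix (n₁ ⊕ n₂) n₂ ℂ}
    (h₀ : Wsᴴ * G * Wz = 0) (h₁ : Wzᴴ * G * Wz = 1)
    (h₀' : Wsᴴ * G * Wz' = 0) (h₁' : Wz'ᴴ * G * Wz' = 1) :
    ‖(fromCols Ws Wz).det‖ = ‖(fromCols Ws Wz').det‖ := by
  have hsq := mul_right_cancel₀ hG <|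
    (norm_det_fromCols_sq_mul_det h₀ h₁).trans (norm_det_fromCols_sq_mul_det h₀' h₁').symm
  exact (pow_left_inj₀ (norm_nonneg _) (norm_nonneg _) two_ne_zero).mp (mod_cast hsq)

end Stationary

theorem JW_fromCols {K L : ℕ} (G : Fin K → Matrix (Fin K ⊕ Fin L) (Fin K ⊕ Fin L) ℂ)
    (Gz : Matrix (Fin K ⊕ Fin L) (Fin K ⊕ Fin L) ℂ) (Ws : Matrix (Fin K ⊕ Fin L) (Fin K) ℂ)
    (Wz : Matrix (Fin K ⊕ Fin L) (Fin L) ℂ) :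
    JW G Gz (fromCols Ws Wz) =
      (∑ k, star (fun i => Ws i k) ⬝ᵥ (G k *ᵥ fun i => Ws i k)).re
        + (trace (Wzᴴ * Gz * Wz)).re - 2 * Real.log ‖(fromCols Ws Wz).det‖ :=
  rfl

theorem JW_eq_on_stationary_points_general (K L : ℕ)
    (G : Fin K → Matrix (Fin K ⊕ Fin L) (Fin K ⊕ Fin L) ℂ)
    (Gz : Matrix (Fin K ⊕ Fin L) (Fin K ⊕ Fin L) ℂ)
    (hGz : Gz.PosDef)
    (Ws : Matrix (Fin K ⊕ Fin L) (Fin K) ℂ)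
    (Wz Wz' : Matrix (Fin K ⊕ Fin L) (Fin L) ℂ)
    (hst : (Matrix.fromCols Ws Wz)ᴴ * Gz * Wz = Ez K L)
    (hst' : (Matrix.fromCols Ws Wz')ᴴ * Gz * Wz' = Ez K L) :
    JW G Gz (Matrix.fromCols Ws Wz) = JW G Gz (Matrix.fromCols Ws Wz') := by
  rw [conjTranspose_fromCols_mul_mul_eq_Ez_iff] at hst hst'
  rw [JW_fromCols, JW_fromCols, hst.2, hst'.2,
    norm_det_fromCols_eq_of_stationary hGz.det_pos.ne' hst.1 hst.2 hst'.1 hst'.2]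

/-- If `W_z` and `W_z'` both make `[W_s, ·]` invertible and both satisfy the
stationary condition `[W_s, ·]ᴴ G_z · = E_z`, then `J_W` takes the same value at
`[W_s, W_z]` and `[W_s, W_z']`. -/
theorem JW_eq_on_stationary_points (K L : ℕ) (hK : 1 ≤ K) (hL : 1 ≤ L)
    (G : Fin K → Matrix (Fin K ⊕ Fin L) (Fin K ⊕ Fin L) ℂ)
    (Gz : Matrix (Fin K ⊕ Fin L) (Fin K ⊕ Fin L) ℂ)
    (hG : ∀ k, (G k).PosDef) (hGz : Gz.PosDef)
    (Ws : Matrix (Fin K ⊕ Fin L) (Fin K) ℂ)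
    (Wz Wz' : Matrix (Fin K ⊕ Fin L) (Fin L) ℂ)
    (hWz : IsUnit (Matrix.fromCols Ws Wz).det)
    (hWz' : IsUnit (Matrix.fromCols Ws Wz').det)
    (hst : (Matrix.fromCols Ws Wz)ᴴ * Gz * Wz = Ez K L)
    (hst' : (Matrix.fromCols Ws Wz')ᴴ * Gz * Wz' = Ez K L) :
    JW G Gz (Matrix.fromCols Ws Wz) = JW G Gz (Matrix.fromCols Ws Wz') :=
  JW_eq_on_stationary_points_general K L G Gz hGz Ws Wz Wz' hst hst'
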